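/- arXiv:2307.01959 — 3 statements merged into one kernel-verified Lean document; each statement's English description precedes it below -/
import Mathlib

section
/- Let A be a nonzero bounded operator on a Hilbert space with closed range. Then γ(A)² = γ(A*A) = γ(AA*) = γ(A*)², where γ denotes the reduced minimum modulus. -/
open ContinuousLinearMap
open scoped ENNReal

noncomputable section

variable {H : Type*} [NormedAddCommGroup H] [InnerProductSpace ℂ H] [CompleteSpace H]

/-- Reduced minimum modulus `γ(A) = inf {‖A f‖ : f ∈ N(A)ᗮ, ‖f‖ = 1}`. -/
def gamma (A : H →L[ℂ] H) : ℝ :=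
  sInf {c : ℝ | ∃ f ∈ (LinearMap.ker (A : H →ₗ[ℂ] H))ᗮ, ‖f‖ = 1 ∧ c = ‖A f‖}

/-- `B` is the Moore–Penrose inverse of `A`. -/
def IsMoorePenrose (A B : H →L[ℂ] H) : Prop :=
  A ∘L B ∘L A = A ∧ B ∘L A ∘L B = B ∧ IsSelfAdjoint (A ∘L B) ∧ IsSelfAdjoint (B ∘L A)

/-- `P` is an orthogonal projection. -/
def IsOrthoProj (P : H →L[ℂ] H) : Prop := P ∘L P = P ∧ IsSelfAdjoint P

/-- `P` is the orthogonal projection onto the subspace `S`. -/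
def IsOrthoProjOnto (P : H →L[ℂ] H) (S : Submodule ℂ H) : Prop :=
  IsOrthoProj P ∧ LinearMap.range (P : H →ₗ[ℂ] H) = S

/-- `V` is a partial isometry. -/
def IsPartialIsom (V : H →L[ℂ] H) : Prop := V ∘L adjoint V ∘L V = V

/-- `A = V C` is the polar decomposition of `A`: `C = |A|` and `V = V_A` is the
partial isometry with `N(V) = N(A)`. -/
def IsPolarDecomp (A V C : H →L[ℂ] H) : Prop :=
  A = V ∘L C ∧ C.IsPositive ∧ C ∘L C = adjoint A ∘L A ∧ IsPartialIsom V ∧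
    LinearMap.ker (V : H →ₗ[ℂ] H) = LinearMap.ker (A : H →ₗ[ℂ] H)

/-- `J` is a two-sided ideal of `B(H)`. -/
structure IsTwoSidedIdeal (J : Set (H →L[ℂ] H)) : Prop where
  zero_mem : (0 : H →L[ℂ] H) ∈ J
  add_mem : ∀ {A B : H →L[ℂ] H}, A ∈ J → B ∈ J → A + B ∈ J
  neg_mem : ∀ {A : H →L[ℂ] H}, A ∈ J → -A ∈ J
  mul_left : ∀ (B : H →L[ℂ] H) {A : H →L[ℂ] H}, A ∈ J → B ∘L A ∈ J
  mul_right : ∀ (B : H →L[ℂ] H) {A : H →L[ℂ] H}, A ∈ J → A ∘L B ∈ J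

/-- `J` is a proper two-sided ideal of `B(H)`. -/
def IsProperIdeal (J : Set (H →L[ℂ] H)) : Prop :=
  IsTwoSidedIdeal J ∧ J ≠ {0} ∧ J ≠ Set.univ

/-- The `n`-th approximation number of `A`; for a compact operator this is the
`(n+1)`-th singular value `s_{n+1}(A)`. -/
def approxNum (A : H →L[ℂ] H) (n : ℕ) : ℝ :=
  sInf {c : ℝ | ∃ F : H →L[ℂ] H, FiniteDimensional ℂ ↥(LinearMap.range (F : H →ₗ[ℂ] H)) ∧
    Module.finrank ℂ ↥(LinearMap.range (F : H →ₗ[ℂ] H)) ≤ n ∧ c = ‖A - F‖}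

/-- Submajorization `s(B) ≺_w s(A)` of the singular value sequences. -/
def Submaj (B A : H →L[ℂ] H) : Prop :=
  ∀ n : ℕ, ∑ i ∈ Finset.range n, approxNum B i ≤ ∑ i ∈ Finset.range n, approxNum A i

/-- `J` is arithmetic mean closed. -/
def IsArithMeanClosed (J : Set (H →L[ℂ] H)) : Prop :=
  ∀ A B : H →L[ℂ] H, A ∈ J → IsCompactOperator (⇑B) → Submaj B A → B ∈ J

/-- Symmetric norming function on the space of finitely supported real sequences. -/
structure IsSymmNormingFun (Φ : (ℕ →₀ ℝ) → ℝ) : Prop where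
  triangle : ∀ x y, Φ (x + y) ≤ Φ x + Φ y
  homog : ∀ (c : ℝ) (x), Φ (c • x) = |c| * Φ x
  definite : ∀ x, Φ x = 0 → x = 0
  normalized : Φ (Finsupp.single 0 1) = 1
  symm : ∀ (σ : Equiv.Perm ℕ) (x), Φ (Finsupp.equivMapDomain σ x) = Φ x
  abs_invariant : ∀ x, Φ (Finsupp.mapRange (fun t => |t|) abs_zero x) = Φ x

/-- The (possibly infinite) norm `‖A‖_Φ = sup_k Φ(s_1(A),…,s_k(A),0,…)`. -/
def phiNorm (Φ : (ℕ →₀ ℝ) → ℝ) (A : H →L[ℂ] H) : ℝ≥0∞ :=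
  ⨆ k : ℕ, ENNReal.ofReal (Φ (∑ i ∈ Finset.range k, Finsupp.single i (approxNum A i)))

/-- `(P, Q)` is a Fredholm pair of projections: `Q P|_{R(P)} : R(P) → R(Q)` has
finite-dimensional kernel `R(P) ∩ N(Q)`, finite-dimensional cokernel
(measured by `R(Q) ∩ N(P)`) and closed range. -/
def IsFredholmPair (P Q : H →L[ℂ] H) : Prop :=
  FiniteDimensional ℂ ↥(LinearMap.range (P : H →ₗ[ℂ] H) ⊓ LinearMap.ker (Q : H →ₗ[ℂ] H)) ∧
  FiniteDimensional ℂ ↥(LinearMap.range (Q : H →ₗ[ℂ] H) ⊓ LinearMap.ker (P : H →ₗ[ℂ] H)) ∧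
  IsClosed (Q '' (LinearMap.range (P : H →ₗ[ℂ] H) : Set H))

/-- Essential codimension `[P : Q] = dim(N(Q) ∩ R(P)) − dim(R(Q) ∩ N(P))`. -/
def essCodim (P Q : H →L[ℂ] H) : ℤ :=
  (Module.finrank ℂ ↥(LinearMap.range (P : H →ₗ[ℂ] H) ⊓ LinearMap.ker (Q : H →ₗ[ℂ] H)) : ℤ) -
    (Module.finrank ℂ ↥(LinearMap.range (Q : H →ₗ[ℂ] H) ⊓ LinearMap.ker (P : H →ₗ[ℂ] H)) : ℤ)

/-- `{f n}` is a frame for the closed subspace `S`. -/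
def IsFrameFor (f : ℕ → H) (S : Submodule ℂ H) : Prop :=
  IsClosed (S : Set H) ∧ (∀ n, f n ∈ S) ∧
  ∃ α β : ℝ, 0 < α ∧ α ≤ β ∧ ∀ v ∈ S,
    α * ‖v‖ ^ 2 ≤ ∑' n, ‖(inner ℂ v (f n) : ℂ)‖ ^ 2 ∧
    ∑' n, ‖(inner ℂ v (f n) : ℂ)‖ ^ 2 ≤ β * ‖v‖ ^ 2

/-- The nonzero point spectrum of `CA`, as an index type. -/
def specIdx (CA : H →L[ℂ] H) : Type _ :=
  {lam : ℝ // lam ≠ 0 ∧ LinearMap.ker ((CA - (lam : ℂ) • (1 : H →L[ℂ] H) : H →L[ℂ] H) : H →ₗ[ℂ] H) ≠ ⊥}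

/-!
A closed-range operator `A` has a Moore–Penrose inverse `B`: invert `A : N(A)ᗮ → R(A)` by the
open mapping theorem and precompose with the orthogonal projection onto `R(A)`. Since `B A` is
the orthogonal projection onto `N(A)ᗮ` and `A B` the one onto `R(A)`, we get `γ(A) = ‖B‖⁻¹`.
The Moore–Penrose inverses of `A*` and `A*A` are `B*` and `B B*`, and `‖B B*‖ = ‖B‖²` by the
C*-identity, so `γ(A*) = γ(A)` and `γ(A*A) = γ(A)²`; the latter applied to `A*` gives
`γ(AA*) = γ(A*)²`.
-/

open scoped InnerProduct

lemma gamma_mul_norm_le {E : Type*} [NormedAddCommGroup E] [InnerProductSpace ℂ E]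
    (A : E →L[ℂ] E) {f : E} (hf : f ∈ (LinearMap.ker (A : E →ₗ[ℂ] E))ᗮ) :
    gamma A * ‖f‖ ≤ ‖A f‖ := by
  rcases eq_or_ne f 0 with rfl | hf0
  · simp
  have hle : gamma A ≤ ‖A ((‖f‖⁻¹ : ℂ) • f)‖ :=
    csInf_le ⟨0, by rintro _ ⟨f, -, -, rfl⟩; exact norm_nonneg _⟩
      ⟨_, Submodule.smul_mem _ _ hf, norm_smul_inv_norm hf0, rfl⟩
  rw [map_smul, norm_smul, norm_inv, Complex.norm_real, norm_norm] at hle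
  rwa [← le_div_iff₀ (norm_pos_iff.mpr hf0), div_eq_inv_mul]

lemma le_gamma {A : H →L[ℂ] H} (hA : A ≠ 0) {c : ℝ}
    (h : ∀ f ∈ (LinearMap.ker (A : H →ₗ[ℂ] H))ᗮ, c * ‖f‖ ≤ ‖A f‖) : c ≤ gamma A := by
  have : CompleteSpace (LinearMap.ker (A : H →ₗ[ℂ] H)) := A.isClosed_ker.completeSpace_coe
  have hker : LinearMap.ker (A : H →ₗ[ℂ] H) ≠ ⊤ := by
    rwa [Ne, LinearMap.ker_eq_top, ← ContinuousLinearMap.toLinearMap_zero,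
      ContinuousLinearMap.coe_inj]
  obtain ⟨f, hf, hf0⟩ := (Submodule.ne_bot_iff _).mp (mt Submodule.orthogonal_eq_bot_iff.mp hker)
  refine le_csInf ⟨_, _, Submodule.smul_mem _ _ hf, norm_smul_inv_norm (𝕜 := ℂ) hf0, rfl⟩ ?_
  rintro _ ⟨u, hu, hu1, rfl⟩
  simpa [hu1] using h u hu

section IsMoorePenrose

variable {A B : H →L[ℂ] H}

lemma IsMoorePenrose.adjoint (h : IsMoorePenrose A B) : IsMoorePenrose (A†) (B†) := by
  obtain ⟨h1, h2, h3, h4⟩ := h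
  refine ⟨?_, ?_, ?_, ?_⟩
  · rw [← adjoint_comp, ← adjoint_comp, comp_assoc, h1]
  · rw [← adjoint_comp, ← adjoint_comp, comp_assoc, h2]
  · rwa [← adjoint_comp, h4.adjoint_eq]
  · rwa [← adjoint_comp, h3.adjoint_eq]

lemma IsMoorePenrose.adjoint_comp_self (h : IsMoorePenrose A B) :
    IsMoorePenrose (A† ∘L A) (B ∘L B†) := by
  obtain ⟨h1, h2, h3, h4⟩ := h
  have hAB : ∀ X : H →L[ℂ] H, B† ∘L A† ∘L X = A ∘L B ∘L X := fun X => by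
    rw [← comp_assoc, ← adjoint_comp, h3.adjoint_eq, comp_assoc]
  have hBA : ∀ X : H →L[ℂ] H, A† ∘L B† ∘L X = B ∘L A ∘L X := fun X => by
    rw [← comp_assoc, ← adjoint_comp, h4.adjoint_eq, comp_assoc]
  have hBAB : ∀ X : H →L[ℂ] H, B ∘L A ∘L B ∘L X = B ∘L X := fun X => by
    simpa only [comp_assoc] using congrArg (· ∘L X) h2
  refine ⟨?_, ?_, ?_, ?_⟩
  · simp only [comp_assoc, hAB, h1]
  · simp only [comp_assoc, hAB, hBAB]
  -- `A*A BB* = A* (AB)* B* = (BA)² = BA`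
  · simp only [comp_assoc]
    rw [← hAB, hBA, ← adjoint_comp, h4.adjoint_eq, hBAB]
    exact h4
  · simp only [comp_assoc, hAB, h1]
    exact h4

lemma IsMoorePenrose.apply_mem_orthogonal_ker (h : IsMoorePenrose A B) (g : H) :
    B g ∈ (LinearMap.ker (A : H →ₗ[ℂ] H))ᗮ := by
  have hB : B = A† ∘L B† ∘L B := by
    conv_lhs => rw [← h.2.1, ← comp_assoc, ← h.2.2.2.adjoint_eq, adjoint_comp]
    rw [comp_assoc]
  rw [hB, A.orthogonal_ker]
  exact Submodule.le_topologicalClosure _ ⟨_, rfl⟩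

lemma IsMoorePenrose.apply_apply_of_mem (h : IsMoorePenrose A B) {f : H}
    (hf : f ∈ (LinearMap.ker (A : H →ₗ[ℂ] H))ᗮ) : B (A f) = f := by
  have hker : B (A f) - f ∈ LinearMap.ker (A : H →ₗ[ℂ] H) := by
    rw [LinearMap.mem_ker, coe_coe, map_sub, sub_eq_zero]
    exact DFunLike.congr_fun h.1 f
  have horth : B (A f) - f ∈ (LinearMap.ker (A : H →ₗ[ℂ] H))ᗮ :=
    sub_mem (h.apply_mem_orthogonal_ker _) hf
  simpa [sub_eq_zero] using (Submodule.inf_orthogonal_eq_bot _).le ⟨hker, horth⟩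

lemma IsMoorePenrose.isStarProjection_comp (h : IsMoorePenrose A B) :
    IsStarProjection (A ∘L B) := by
  refine ⟨?_, h.2.2.1⟩
  change (A ∘L B) ∘L A ∘L B = A ∘L B
  rw [← comp_assoc, comp_assoc A, h.1]

lemma IsMoorePenrose.norm_apply_apply_le (h : IsMoorePenrose A B) (g : H) : ‖A (B g)‖ ≤ ‖g‖ := by
  simpa using (A ∘L B).le_of_opNorm_le h.isStarProjection_comp.norm_le g

lemma IsMoorePenrose.gamma_eq_inv_norm (h : IsMoorePenrose A B) : gamma A = ‖B‖⁻¹ := by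
  rcases eq_or_ne A 0 with rfl | hA
  -- `γ(0) = sInf ∅ = 0` and `‖0‖⁻¹ = 0⁻¹ = 0`.
  · obtain rfl : B = 0 := by simpa using h.2.1.symm
    simp [gamma]
  have hB : 0 < ‖B‖ := norm_pos_iff.2 fun hB => hA (by simpa [hB] using h.1.symm)
  have hlow : ‖B‖⁻¹ ≤ gamma A := le_gamma hA fun f hf => by
    rw [inv_mul_le_iff₀ hB]
    calc ‖f‖ = ‖B (A f)‖ := by rw [h.apply_apply_of_mem hf]
      _ ≤ ‖B‖ * ‖A f‖ := B.le_opNorm _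
  have hpos : 0 < gamma A := (inv_pos.2 hB).trans_le hlow
  have hup : ‖B‖ ≤ (gamma A)⁻¹ := B.opNorm_le_bound (inv_nonneg.2 hpos.le) fun g => by
    rw [inv_mul_eq_div, le_div_iff₀' hpos]
    exact (gamma_mul_norm_le A (h.apply_mem_orthogonal_ker g)).trans (h.norm_apply_apply_le g)
  exact le_antisymm ((le_inv_comm₀ hB hpos).1 hup) hlow

lemma IsMoorePenrose.gamma_adjoint (h : IsMoorePenrose A B) : gamma (A†) = gamma A := by
  rw [h.adjoint.gamma_eq_inv_norm, h.gamma_eq_inv_norm, LinearIsometryEquiv.norm_map]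

lemma IsMoorePenrose.gamma_adjoint_comp_self (h : IsMoorePenrose A B) :
    gamma (A† ∘L A) = gamma A ^ 2 := by
  rw [h.adjoint_comp_self.gamma_eq_inv_norm, h.gamma_eq_inv_norm, inv_pow, sq]
  congr 1
  simpa using norm_adjoint_comp_self (B†)

end IsMoorePenrose

lemma apply_starProjection_orthogonal_ker {𝕜 E F : Type*} [RCLike 𝕜] [NormedAddCommGroup E]
    [InnerProductSpace 𝕜 E] [CompleteSpace E] [NormedAddCommGroup F] [NormedSpace 𝕜 F]
    (A : E →L[𝕜] F) (x : E) :
    A ((LinearMap.ker (A : E →ₗ[𝕜] F))ᗮ.starProjection x) = A x := by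
  have : CompleteSpace (LinearMap.ker (A : E →ₗ[𝕜] F)) := A.isClosed_ker.completeSpace_coe
  rw [Submodule.starProjection_orthogonal_val, map_sub, sub_eq_self]
  exact (LinearMap.ker (A : E →ₗ[𝕜] F)).starProjection_apply_mem x

lemma exists_isMoorePenrose (A : H →L[ℂ] H)
    (hcl : IsClosed (LinearMap.range (A : H →ₗ[ℂ] H) : Set H)) : ∃ B, IsMoorePenrose A B := by
  set K := (LinearMap.ker (A : H →ₗ[ℂ] H))ᗮ
  set R := LinearMap.range (A : H →ₗ[ℂ] H)
  have : CompleteSpace R := hcl.completeSpace_coe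
  let Ā : K →L[ℂ] R := (A ∘L K.subtypeL).codRestrict R fun f => LinearMap.mem_range_self _ _
  have hinj : LinearMap.ker (Ā : K →ₗ[ℂ] R) = ⊥ := by
    refine (Submodule.eq_bot_iff _).2 fun f hf => Subtype.ext ?_
    have hfN : (f : H) ∈ LinearMap.ker (A : H →ₗ[ℂ] H) := congrArg Subtype.val hf
    simpa using (Submodule.inf_orthogonal_eq_bot _).le ⟨hfN, f.2⟩
  have hsurj : LinearMap.range (Ā : K →ₗ[ℂ] R) = ⊤ := by
    refine Submodule.eq_top_iff'.2 fun ⟨_, x, hx⟩ => ⟨K.orthogonalProjectionOnto x, ?_⟩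
    exact Subtype.ext ((apply_starProjection_orthogonal_ker A x).trans hx)
  let e := ContinuousLinearEquiv.ofBijective Ā hinj hsurj
  let B : H →L[ℂ] H := K.subtypeL ∘L (e.symm : R →L[ℂ] K) ∘L R.orthogonalProjectionOnto
  have hAB : A ∘L B = R.starProjection := by
    ext g
    exact congrArg Subtype.val (e.apply_symm_apply (R.orthogonalProjectionOnto g))
  have hBA : B ∘L A = K.starProjection := by
    ext x
    have : R.orthogonalProjectionOnto (A x) = e (K.orthogonalProjectionOnto x) :=
      Subtype.ext ((R.starProjection_eq_self_iff.2 ⟨x, rfl⟩).trans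
        (apply_starProjection_orthogonal_ker A x).symm)
    exact congrArg Subtype.val ((congrArg e.symm this).trans (e.symm_apply_apply _))
  refine ⟨B, ?_, ?_, ?_, ?_⟩
  · rw [← comp_assoc, hAB]
    ext x
    exact R.starProjection_eq_self_iff.2 ⟨x, rfl⟩
  · rw [← comp_assoc, hBA]
    ext g
    exact K.starProjection_eq_self_iff.2 (e.symm _).2
  · rw [hAB]
    exact isSelfAdjoint_starProjection R
  · rw [hBA]
    exact isSelfAdjoint_starProjection K

theorem stmt_1_general (A : H →L[ℂ] H)
    (hcl : IsClosed (LinearMap.range (A : H →ₗ[ℂ] H) : Set H)) :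
    gamma A ^ 2 = gamma (adjoint A ∘L A) ∧
    gamma (adjoint A ∘L A) = gamma (A ∘L adjoint A) ∧
    gamma (A ∘L adjoint A) = gamma (adjoint A) ^ 2 := by
  obtain ⟨B, hB⟩ := exists_isMoorePenrose A hcl
  have hAstarA := hB.gamma_adjoint_comp_self
  have hAAstar := hB.adjoint.gamma_adjoint_comp_self
  rw [adjoint_adjoint] at hAAstar
  exact ⟨hAstarA.symm, by rw [hAstarA, hAAstar, hB.gamma_adjoint], hAAstar⟩

/-- For a nonzero closed range operator `A`,
`γ(A)² = γ(A*A) = γ(AA*) = γ(A*)²`. -/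
theorem stmt_1 (A : H →L[ℂ] H) (hA : A ≠ 0)
    (hcl : IsClosed (LinearMap.range (A : H →ₗ[ℂ] H) : Set H)) :
    gamma A ^ 2 = gamma (adjoint A ∘L A) ∧
    gamma (adjoint A ∘L A) = gamma (A ∘L adjoint A) ∧
    gamma (A ∘L adjoint A) = gamma (adjoint A) ^ 2 :=
  stmt_1_general A hcl

end
end

section
/- Let J be a two-sided ideal of the algebra of bounded operators on a Hilbert space H, and let A, B be closed range operators with A − B ∈ J. Then A^† − B^† ∈ J, P_{R(A)} − P_{R(B)} ∈ J, and P_{N(A)} − P_{N(B)} ∈ J. -/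
open ContinuousLinearMap
open scoped ENNReal

noncomputable section

variable {H : Type*} [NormedAddCommGroup H] [InnerProductSpace ℂ H] [CompleteSpace H]

/-!
Every two-sided ideal of `B(H)` is self-adjoint. For `T ∈ J` put `|T| = (T*T)^{1/2}`; since
`‖|T| x‖ = ‖T x‖`, the map `T x ↦ |T| x` extends to a bounded `W` vanishing on `R(T)ᗮ = N(T*)`,
and then `|T| = W T ∈ J` and `T* = |T| W ∈ J`.

The rest is algebra in `B(H)`. With `p = A A†` and `q = B B†`, `(1 - q) p = (1 - q)(A - B) A†`
lies in `J`, and so does `(1 - p) q`; taking adjoints, `p - q = p (1 - q) - (1 - p) q ∈ J`.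
Likewise `A†A - B†B ∈ J`, and then
`A† - B† = A†(AA† - BB†) - A†(A - B)B† + (A†A - B†B)B† ∈ J`. Finally `P_{R(A)} = AA†` and
`P_{N(A)} = 1 - A†A`.
-/

namespace ContinuousLinearMap

variable {𝕜 E F G : Type*} [RCLike 𝕜]

section InnerProductSpace

variable [NormedAddCommGroup E] [InnerProductSpace 𝕜 E] [CompleteSpace E]
  [NormedAddCommGroup F] [InnerProductSpace 𝕜 F] [CompleteSpace F]
  [NormedAddCommGroup G] [InnerProductSpace 𝕜 G] [CompleteSpace G]

theorem norm_apply_eq_of_adjoint_comp_self_eq {C : E →L[𝕜] F} {T : E →L[𝕜] G}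
    (h : adjoint C ∘L C = adjoint T ∘L T) (x : E) : ‖C x‖ = ‖T x‖ := by
  have hsq : ‖C x‖ ^ 2 = ‖T x‖ ^ 2 := by
    rw [apply_norm_sq_eq_inner_adjoint_left, apply_norm_sq_eq_inner_adjoint_left, h]
  exact (sq_eq_sq₀ (norm_nonneg _) (norm_nonneg _)).1 hsq

end InnerProductSpace

variable [NormedAddCommGroup E] [NormedSpace 𝕜 E]
  [NormedAddCommGroup F] [InnerProductSpace 𝕜 F] [CompleteSpace F]
  [NormedAddCommGroup G] [NormedSpace 𝕜 G]

theorem ext_of_comp_eq_of_eqOn_orthogonal {T : E →L[𝕜] F} {g₁ g₂ : F →L[𝕜] G}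
    (h : g₁ ∘L T = g₂ ∘L T) (h' : ∀ y ∈ T.rangeᗮ, g₁ y = g₂ y) : g₁ = g₂ := by
  set K := T.range.topologicalClosure
  have hK : Set.EqOn g₁ g₂ K := by
    rw [Submodule.topologicalClosure_coe]
    refine Set.EqOn.closure ?_ g₁.continuous g₂.continuous
    rintro _ ⟨x, rfl⟩
    exact congr($h x)
  ext y
  obtain ⟨p, hp, q, hq, rfl⟩ :=
    Submodule.mem_sup.1 (K.sup_orthogonal_of_hasOrthogonalProjection ▸ Submodule.mem_top (x := y))
  rw [Submodule.orthogonal_closure] at hq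
  rw [map_add, map_add, hK hp, h' q hq]

theorem exists_comp_eq_of_norm_apply_le [CompleteSpace G] {T : E →L[𝕜] F} {C : E →L[𝕜] G}
    (h : ∃ c, ∀ x, ‖C x‖ ≤ c * ‖T x‖) :
    ∃ W : F →L[𝕜] G, W ∘L T = C ∧ ∀ y ∈ T.rangeᗮ, W y = 0 := by
  set K := T.range.topologicalClosure
  set T' : E →L[𝕜] K := K.orthogonalProjectionOnto ∘L T
  have hT' : ∀ x, (T' x : F) = T x := fun x =>
    K.starProjection_eq_self_iff.2 (T.range.le_topologicalClosure ⟨x, rfl⟩)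
  have hdense : DenseRange T' := by
    rw [DenseRange, Subtype.dense_iff, ← Set.range_comp]
    simp only [Function.comp_def, hT']
    exact subset_of_eq (Submodule.topologicalClosure_coe _)
  refine ⟨(C : E →ₗ[𝕜] G).extendOfNorm (T' : E →ₗ[𝕜] K) ∘L K.orthogonalProjectionOnto, ?_, ?_⟩
  · ext x
    refine LinearMap.extendOfNorm_eq hdense ?_ x
    simpa [← hT'] using h
  · intro y hy
    rw [← Submodule.orthogonal_closure] at hy
    rw [comp_apply, K.orthogonalProjectionOnto_eq_zero_iff.2 hy, map_zero]

end ContinuousLinearMap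

theorem TwoSidedIdeal.star_mem_of_mem (I : TwoSidedIdeal (H →L[ℂ] H)) {T : H →L[ℂ] H} (hT : T ∈ I) :
    star T ∈ I := by
  set C := CFC.abs T
  have hC : IsSelfAdjoint C := (CFC.abs_nonneg T).isSelfAdjoint
  have hCC : adjoint C ∘L C = adjoint T ∘L T := by
    rw [← star_eq_adjoint, hC.star_eq]
    exact CFC.abs_mul_abs T
  obtain ⟨W, hWT, hW⟩ := exists_comp_eq_of_norm_apply_le (T := T) (C := C)
    ⟨1, fun x => (one_mul ‖T x‖).symm ▸ (norm_apply_eq_of_adjoint_comp_self_eq hCC x).le⟩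
  have hCI : C ∈ I := hWT ▸ I.mul_mem_left W T hT
  suffices star T = C * W from this ▸ I.mul_mem_right C W hCI
  refine ext_of_comp_eq_of_eqOn_orthogonal (T := T) ?_ fun y hy => ?_
  · rw [star_eq_adjoint, ← hCC, mul_def, comp_assoc, hWT, hC.adjoint_eq]
  · have hy' : y ∈ (adjoint T).ker := T.orthogonal_range ▸ hy
    rw [star_eq_adjoint, mul_def, comp_apply, hW y hy, map_zero]
    exact hy'

namespace TwoSidedIdeal

variable {R : Type*} [Ring R] (I : TwoSidedIdeal R) {a b a' b' : R}

theorem one_sub_mul_mul_mem (hab : a - b ∈ I) (hb : b * b' * b = b) :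
    (1 - b * b') * a ∈ I := by
  have : (1 - b * b') * (a - b) = (1 - b * b') * a - (b - b * b' * b) := by noncomm_ring
  rw [hb, sub_self, sub_zero] at this
  exact this ▸ I.mul_mem_left _ _ hab

theorem mul_one_sub_mul_mem (hab : a - b ∈ I) (hb : b * b' * b = b) :
    a * (1 - b' * b) ∈ I := by
  have : (a - b) * (1 - b' * b) = a * (1 - b' * b) - (b - b * b' * b) := by noncomm_ring
  rw [hb, sub_self, sub_zero] at this
  exact this ▸ I.mul_mem_right _ _ hab

theorem sub_mem_of_mul_sub_mul_mem (hab : a - b ∈ I) (ha : a' * a * a' = a')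
    (hb : b' * b * b' = b') (hr : a * a' - b * b' ∈ I) (hk : a' * a - b' * b ∈ I) :
    a' - b' ∈ I := by
  have : a' - b' = a' * (a * a' - b * b') - a' * (a - b) * b' + (a' * a - b' * b) * b' := by
    calc a' - b' = a' * a * a' - b' * b * b' := by rw [ha, hb]
    _ = _ := by noncomm_ring
  rw [this]
  exact I.add_mem
    (I.sub_mem (I.mul_mem_left _ _ hr) (I.mul_mem_right _ _ (I.mul_mem_left _ _ hab)))
    (I.mul_mem_right _ _ hk)

variable [StarRing R]

theorem mul_mem_comm_of_isSelfAdjoint (hI : ∀ x ∈ I, star x ∈ I) {x y : R}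
    (hx : IsSelfAdjoint x) (hy : IsSelfAdjoint y) (h : x * y ∈ I) : y * x ∈ I := by
  simpa only [star_mul, hx.star_eq, hy.star_eq] using hI _ h

theorem sub_mem_of_one_sub_mul_mem (hI : ∀ x ∈ I, star x ∈ I) {p q : R}
    (hp : IsSelfAdjoint p) (hq : IsSelfAdjoint q) (hqp : (1 - q) * p ∈ I)
    (hpq : (1 - p) * q ∈ I) : p - q ∈ I := by
  have hpq' : p * (1 - q) ∈ I :=
    I.mul_mem_comm_of_isSelfAdjoint hI ((IsSelfAdjoint.one R).sub hq) hp hqp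
  have : p - q = p * (1 - q) - (1 - p) * q := by noncomm_ring
  exact this ▸ I.sub_mem hpq' hpq

theorem mul_sub_mul_mem_of_sub_mem (hI : ∀ x ∈ I, star x ∈ I) (hab : a - b ∈ I)
    (ha : a * a' * a = a) (hb : b * b' * b = b)
    (ha' : IsSelfAdjoint (a * a')) (hb' : IsSelfAdjoint (b * b')) :
    a * a' - b * b' ∈ I := by
  have hba : b - a ∈ I := by simpa using I.neg_mem hab
  refine I.sub_mem_of_one_sub_mul_mem hI ha' hb' ?_ ?_
  · rw [← mul_assoc]; exact I.mul_mem_right _ _ (I.one_sub_mul_mul_mem hab hb)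
  · rw [← mul_assoc]; exact I.mul_mem_right _ _ (I.one_sub_mul_mul_mem hba ha)

theorem mul_sub_mul_mem_of_sub_mem' (hI : ∀ x ∈ I, star x ∈ I) (hab : a - b ∈ I)
    (ha : a * a' * a = a) (hb : b * b' * b = b)
    (ha' : IsSelfAdjoint (a' * a)) (hb' : IsSelfAdjoint (b' * b)) :
    a' * a - b' * b ∈ I := by
  have hba : b - a ∈ I := by simpa using I.neg_mem hab
  refine I.sub_mem_of_one_sub_mul_mem hI ha' hb'
    (I.mul_mem_comm_of_isSelfAdjoint hI ha' ((IsSelfAdjoint.one R).sub hb') ?_)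
    (I.mul_mem_comm_of_isSelfAdjoint hI hb' ((IsSelfAdjoint.one R).sub ha') ?_)
  · rw [mul_assoc]; exact I.mul_mem_left _ _ (I.mul_one_sub_mul_mem hab hb)
  · rw [mul_assoc]; exact I.mul_mem_left _ _ (I.mul_one_sub_mul_mem hba ha)

end TwoSidedIdeal

theorem IsOrthoProjOnto.eq {P P' : H →L[ℂ] H} {S : Submodule ℂ H}
    (h : IsOrthoProjOnto P S) (h' : IsOrthoProjOnto P' S) : P = P' :=
  IsStarProjection.ext ⟨h.1.1, h.1.2⟩ ⟨h'.1.1, h'.1.2⟩ (h.2.trans h'.2.symm)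

namespace IsMoorePenrose

variable {A Ad : H →L[ℂ] H}

theorem isOrthoProjOnto_range (h : IsMoorePenrose A Ad) :
    IsOrthoProjOnto (A ∘L Ad) (LinearMap.range (A : H →ₗ[ℂ] H)) := by
  refine ⟨⟨?_, h.2.2.1⟩, le_antisymm (LinearMap.range_comp_le_range _ _) ?_⟩
  · change A * Ad * (A * Ad) = A * Ad
    rw [← mul_assoc, mul_assoc A Ad A]
    exact congrArg (· * Ad) h.1
  · rintro _ ⟨x, rfl⟩
    exact ⟨A x, DFunLike.congr_fun h.1 x⟩

theorem isOrthoProjOnto_ker (h : IsMoorePenrose A Ad) :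
    IsOrthoProjOnto (1 - Ad ∘L A) (LinearMap.ker (A : H →ₗ[ℂ] H)) := by
  have hAdA : IsIdempotentElem (Ad * A) := by
    rw [IsIdempotentElem, mul_assoc, ← mul_assoc A]
    exact congrArg (Ad * ·) h.1
  refine ⟨⟨hAdA.one_sub, (IsSelfAdjoint.one _).sub h.2.2.2⟩, le_antisymm ?_ ?_⟩
  · rintro _ ⟨x, rfl⟩
    change A (x - Ad (A x)) = 0
    rw [map_sub, sub_eq_zero]
    exact (DFunLike.congr_fun h.1 x).symm
  · intro x hx
    refine ⟨x, ?_⟩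
    change x - Ad (A x) = x
    rw [show A x = 0 from hx, map_zero, sub_zero]

end IsMoorePenrose

theorem stmt_4_general (J : Set (H →L[ℂ] H)) (hJ : IsTwoSidedIdeal J)
    (A B Ad Bd PA PB QA QB : H →L[ℂ] H)
    (hAB : A - B ∈ J)
    (hAd : IsMoorePenrose A Ad) (hBd : IsMoorePenrose B Bd)
    (hPA : IsOrthoProjOnto PA (LinearMap.range (A : H →ₗ[ℂ] H)))
    (hPB : IsOrthoProjOnto PB (LinearMap.range (B : H →ₗ[ℂ] H)))
    (hQA : IsOrthoProjOnto QA (LinearMap.ker (A : H →ₗ[ℂ] H)))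
    (hQB : IsOrthoProjOnto QB (LinearMap.ker (B : H →ₗ[ℂ] H))) :
    Ad - Bd ∈ J ∧ PA - PB ∈ J ∧ QA - QB ∈ J := by
  obtain ⟨I, hIJ⟩ : ∃ I : TwoSidedIdeal (H →L[ℂ] H), ∀ T, T ∈ I ↔ T ∈ J :=
    ⟨.mk' J hJ.zero_mem hJ.add_mem hJ.neg_mem (hJ.mul_left _) (hJ.mul_right _),
      fun _ => TwoSidedIdeal.mem_mk' ..⟩
  simp only [← hIJ] at hAB ⊢
  have hI : ∀ T ∈ I, star T ∈ I := fun _ => I.star_mem_of_mem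
  have ha : A * Ad * A = A := (mul_assoc _ _ _).trans hAd.1
  have hb : B * Bd * B = B := (mul_assoc _ _ _).trans hBd.1
  have hP : A * Ad - B * Bd ∈ I :=
    I.mul_sub_mul_mem_of_sub_mem hI hAB ha hb hAd.2.2.1 hBd.2.2.1
  have hQ : Ad * A - Bd * B ∈ I :=
    I.mul_sub_mul_mem_of_sub_mem' hI hAB ha hb hAd.2.2.2 hBd.2.2.2
  refine ⟨I.sub_mem_of_mul_sub_mul_mem hAB ((mul_assoc _ _ _).trans hAd.2.1)
    ((mul_assoc _ _ _).trans hBd.2.1) hP hQ, ?_, ?_⟩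
  · rw [hPA.eq hAd.isOrthoProjOnto_range, hPB.eq hBd.isOrthoProjOnto_range]
    exact hP
  · rw [hQA.eq hAd.isOrthoProjOnto_ker, hQB.eq hBd.isOrthoProjOnto_ker,
      sub_sub_sub_cancel_left, ← neg_sub]
    exact I.neg_mem hQ

/-- If `J` is a two-sided ideal and `A, B` are closed range operators
with `A − B ∈ J`, then `A† − B† ∈ J`, `P_{R(A)} − P_{R(B)} ∈ J` and
`P_{N(A)} − P_{N(B)} ∈ J`. -/
theorem stmt_4 (J : Set (H →L[ℂ] H)) (hJ : IsTwoSidedIdeal J)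
    (A B Ad Bd PA PB QA QB : H →L[ℂ] H)
    (hAcl : IsClosed (LinearMap.range (A : H →ₗ[ℂ] H) : Set H))
    (hBcl : IsClosed (LinearMap.range (B : H →ₗ[ℂ] H) : Set H))
    (hAB : A - B ∈ J)
    (hAd : IsMoorePenrose A Ad) (hBd : IsMoorePenrose B Bd)
    (hPA : IsOrthoProjOnto PA (LinearMap.range (A : H →ₗ[ℂ] H)))
    (hPB : IsOrthoProjOnto PB (LinearMap.range (B : H →ₗ[ℂ] H)))
    (hQA : IsOrthoProjOnto QA (LinearMap.ker (A : H →ₗ[ℂ] H)))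
    (hQB : IsOrthoProjOnto QB (LinearMap.ker (B : H →ₗ[ℂ] H))) :
    Ad - Bd ∈ J ∧ PA - PB ∈ J ∧ QA - QB ∈ J :=
  stmt_4_general J hJ A B Ad Bd PA PB QA QB hAB hAd hBd hPA hPB hQA hQB

end
end

section
/- Let J be a proper two-sided ideal of B(H) and A a closed range operator with polar decomposition A = V_A|A|. If |A*| − P_{R(A)} ∈ J, then there exists an invertible operator G with G − I ∈ J such that GA = V_A. -/
/-! Put `T = |A*| + (I - P_{R(A)})`. Uniqueness of positive square roots gives `|A*| = V_A |A| V_A*`,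
hence `|A*| V_A = A`; closedness of `R(A)` gives `R(V_A) ⊆ R(A)`, so `T V_A = A`. The operator `T` is
self-adjoint and surjective (it is `|A*|` on `R(A)` and the identity on `R(A)ᗮ`), hence invertible,
and `G = T⁻¹` works because `G - I = T⁻¹ (P_{R(A)} - |A*|)`. -/

open ContinuousLinearMap
open scoped ENNReal

noncomputable section

variable {H : Type*} [NormedAddCommGroup H] [InnerProductSpace ℂ H] [CompleteSpace H]

namespace ContinuousLinearMap

variable {𝕜 E F : Type*} [RCLike 𝕜]
  [NormedAddCommGroup E] [InnerProductSpace 𝕜 E] [CompleteSpace E]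
  [NormedAddCommGroup F] [InnerProductSpace 𝕜 F] [CompleteSpace F]

theorem ker_eq_ker_of_comp_self_eq {C : E →L[𝕜] E} {A : E →L[𝕜] F} (hC : IsSelfAdjoint C)
    (h : C ∘L C = adjoint A ∘L A) :
    LinearMap.ker (C : E →ₗ[𝕜] E) = LinearMap.ker (A : E →ₗ[𝕜] F) := by
  have := C.ker_adjoint_comp_self
  rw [hC.adjoint_eq, h, ker_adjoint_comp_self] at this
  exact this.symm

theorem range_le_topologicalClosure_range_comp {V : E →L[𝕜] F} {C : E →L[𝕜] E}
    (hC : IsSelfAdjoint C)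
    (hker : LinearMap.ker (C : E →ₗ[𝕜] E) ≤ LinearMap.ker (V : E →ₗ[𝕜] F)) :
    LinearMap.range (V : E →ₗ[𝕜] F) ≤
      (LinearMap.range ((V ∘L C : E →L[𝕜] F) : E →ₗ[𝕜] F)).topologicalClosure := by
  have hperp : (LinearMap.range ((V ∘L C : E →L[𝕜] F) : E →ₗ[𝕜] F))ᗮ ≤
      (LinearMap.range (V : E →ₗ[𝕜] F))ᗮ := by
    intro z hz
    rw [orthogonal_range, adjoint_comp, hC.adjoint_eq] at hz
    rw [orthogonal_range, ← ker_self_comp_adjoint]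
    exact hker hz
  rw [← Submodule.orthogonal_orthogonal_eq_closure]
  exact (Submodule.le_orthogonal_orthogonal _).trans (Submodule.orthogonal_le hperp)

theorem _root_.IsSelfAdjoint.injective_of_surjective {T : E →L[𝕜] E} (hT : IsSelfAdjoint T)
    (hsurj : Function.Surjective T) : Function.Injective T := by
  have hker := T.orthogonal_range
  rw [hT.adjoint_eq, LinearMap.range_eq_top.mpr hsurj, Submodule.top_orthogonal_eq_bot] at hker
  exact LinearMap.ker_eq_bot.mp hker.symm

end ContinuousLinearMap

theorem IsOrthoProjOnto.apply_eq_self {P : H →L[ℂ] H} {S : Submodule ℂ H}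
    (hP : IsOrthoProjOnto P S) {y : H} (hy : y ∈ S) : P y = y := by
  obtain ⟨x, rfl⟩ := hP.2 ▸ hy
  exact DFunLike.congr_fun hP.1.1 x

theorem IsOrthoProjOnto.ker_eq {P : H →L[ℂ] H} {S : Submodule ℂ H} (hP : IsOrthoProjOnto P S) :
    LinearMap.ker (P : H →ₗ[ℂ] H) = Sᗮ := by
  rw [← hP.2, orthogonal_range, hP.1.2.adjoint_eq]

theorem IsPartialIsom.comp_adjoint_comp_self {V C : H →L[ℂ] H} (hV : IsPartialIsom V)
    (hker : LinearMap.ker (V : H →ₗ[ℂ] H) ≤ LinearMap.ker (C : H →ₗ[ℂ] H)) :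
    C ∘L (adjoint V ∘L V) = C := by
  ext x
  have hx : V (adjoint V (V x) - x) = 0 := by
    have hVx := DFunLike.congr_fun hV x
    simp only [comp_apply] at hVx
    rw [map_sub, hVx, sub_self]
  simpa [sub_eq_zero] using hker hx

namespace IsPolarDecomp

variable {A V C D P : H →L[ℂ] H}

theorem ker_abs (h : IsPolarDecomp A V C) :
    LinearMap.ker (C : H →ₗ[ℂ] H) = LinearMap.ker (A : H →ₗ[ℂ] H) :=
  ker_eq_ker_of_comp_self_eq h.2.1.isSelfAdjoint h.2.2.1

theorem abs_comp_adjoint_comp_self (h : IsPolarDecomp A V C) : C ∘L (adjoint V ∘L V) = C :=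
  h.2.2.2.1.comp_adjoint_comp_self (h.2.2.2.2.trans h.ker_abs.symm).le

theorem abs_adjoint_eq (h : IsPolarDecomp A V C) (hD : D.IsPositive)
    (hD2 : D ∘L D = A ∘L adjoint A) : D = V ∘L C ∘L adjoint V := by
  have hVCV : (0 : H →L[ℂ] H) ≤ V ∘L C ∘L adjoint V :=
    (nonneg_iff_isPositive _).mpr (h.2.1.conj_adjoint V)
  refine (CFC.mul_self_eq_mul_self_iff D _ ((nonneg_iff_isPositive _).mpr hD) hVCV).mp ?_
  calc D * D = A ∘L adjoint A := hD2
    _ = V ∘L (C ∘L (adjoint V ∘L V)) ∘L C ∘L adjoint V := by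
      rw [h.abs_comp_adjoint_comp_self, h.1, adjoint_comp, h.2.1.isSelfAdjoint.adjoint_eq]
      simp only [comp_assoc]
    _ = (V ∘L C ∘L adjoint V) * (V ∘L C ∘L adjoint V) := by simp only [mul_def, comp_assoc]

theorem abs_adjoint_comp (h : IsPolarDecomp A V C) (hD : D.IsPositive)
    (hD2 : D ∘L D = A ∘L adjoint A) : D ∘L V = A := by
  conv_rhs => rw [h.1, ← h.abs_comp_adjoint_comp_self]
  rw [h.abs_adjoint_eq hD hD2]
  simp only [comp_assoc]

theorem range_le_range (h : IsPolarDecomp A V C)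
    (hA : IsClosed (LinearMap.range (A : H →ₗ[ℂ] H) : Set H)) :
    LinearMap.range (V : H →ₗ[ℂ] H) ≤ LinearMap.range (A : H →ₗ[ℂ] H) := by
  have := range_le_topologicalClosure_range_comp h.2.1.isSelfAdjoint
    (h.ker_abs.trans h.2.2.2.2.symm).le
  rwa [← h.1, hA.submodule_topologicalClosure_eq] at this


theorem add_one_sub_comp (h : IsPolarDecomp A V C)
    (hA : IsClosed (LinearMap.range (A : H →ₗ[ℂ] H) : Set H))
    (hD : D.IsPositive) (hD2 : D ∘L D = A ∘L adjoint A)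
    (hP : IsOrthoProjOnto P (LinearMap.range (A : H →ₗ[ℂ] H))) :
    (D + (1 - P)) ∘L V = A := by
  ext x
  have hPV : P (V x) = V x := hP.apply_eq_self (h.range_le_range hA ⟨x, rfl⟩)
  have hDV : D (V x) = A x := DFunLike.congr_fun (h.abs_adjoint_comp hD hD2) x
  simp [hPV, hDV]

theorem bijective_add_one_sub (h : IsPolarDecomp A V C)
    (hA : IsClosed (LinearMap.range (A : H →ₗ[ℂ] H) : Set H))
    (hD : D.IsPositive) (hD2 : D ∘L D = A ∘L adjoint A)
    (hP : IsOrthoProjOnto P (LinearMap.range (A : H →ₗ[ℂ] H))) :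
    Function.Bijective ⇑(D + (1 - P)) := by
  have hsurj : Function.Surjective ⇑(D + (1 - P)) := by
    intro y
    have hPy : P y ∈ LinearMap.range (A : H →ₗ[ℂ] H) := hP.2 ▸ LinearMap.mem_range_self _ y
    obtain ⟨w, hw⟩ := id hPy
    have hPz : P (y - P y) = 0 := by rw [map_sub, hP.apply_eq_self hPy, sub_self]
    -- `D` and `A*` have the same kernel `R(A)ᗮ = N(P)`
    have hDz : D (y - P y) = 0 := by
      have hker : LinearMap.ker (D : H →ₗ[ℂ] H) = LinearMap.ker (P : H →ₗ[ℂ] H) := by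
        rw [hP.ker_eq, orthogonal_range]
        exact ker_eq_ker_of_comp_self_eq hD.isSelfAdjoint (by rwa [adjoint_adjoint])
      exact (hker ▸ hPz : y - P y ∈ LinearMap.ker (D : H →ₗ[ℂ] H))
    refine ⟨V w + (y - P y), ?_⟩
    have hTV := DFunLike.congr_fun (h.add_one_sub_comp hA hD hD2 hP) w
    simp only [comp_apply] at hTV
    have hTz : (D + (1 - P)) (y - P y) = y - P y := by simp [hDz, hPz]
    rw [map_add, hTV, hTz, ← coe_coe, hw, add_sub_cancel]
  exact ⟨(hD.isSelfAdjoint.add ((IsSelfAdjoint.one _).sub hP.1.2)).injective_of_surjective hsurj,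
    hsurj⟩

end IsPolarDecomp

/-- Let `J` be a proper two-sided ideal, `A` a closed range
operator with polar decomposition `A = V_A|A|`. If `|A*| − P_{R(A)} ∈ J`, then
there exists an invertible `G` with `G − I ∈ J` and `GA = V_A`. -/
theorem stmt_12 (J : Set (H →L[ℂ] H)) (hJ : IsProperIdeal J)
    (A VA CA CAs PRA : H →L[ℂ] H)
    (hAcl : IsClosed (LinearMap.range (A : H →ₗ[ℂ] H) : Set H))
    (hApd : IsPolarDecomp A VA CA)
    (hCAs : CAs.IsPositive) (hCAs2 : CAs ∘L CAs = A ∘L adjoint A)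
    (hPRA : IsOrthoProjOnto PRA (LinearMap.range (A : H →ₗ[ℂ] H)))
    (hyp : CAs - PRA ∈ J) :
    ∃ G : (H →L[ℂ] H)ˣ, (G : H →L[ℂ] H) - 1 ∈ J ∧ (G : H →L[ℂ] H) ∘L A = VA := by
  obtain ⟨T, hT⟩ := isUnit_iff_bijective.mpr (hApd.bijective_add_one_sub hAcl hCAs hCAs2 hPRA)
  have hTV : (T : H →L[ℂ] H) ∘L VA = A := hT ▸ hApd.add_one_sub_comp hAcl hCAs hCAs2 hPRA
  refine ⟨T⁻¹, ?_, ?_⟩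
  · have hG : (↑T⁻¹ : H →L[ℂ] H) - 1 = ↑T⁻¹ ∘L (-(CAs - PRA)) := by
      rw [← mul_def, show -(CAs - PRA) = 1 - (T : H →L[ℂ] H) by rw [hT]; abel, mul_sub,
        mul_one, Units.inv_mul]
    exact hG ▸ hJ.1.mul_left _ (hJ.1.neg_mem hyp)
  · rw [← hTV, ← comp_assoc]
    change ((↑T⁻¹ : H →L[ℂ] H) * (T : H →L[ℂ] H)) ∘L VA = VA
    rw [Units.inv_mul, one_def, id_comp]

end
end
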